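/- arXiv:1303.0214 — 2 statements merged into one kernel-verified Lean document; each statement's English description precedes it below -/
import Mathlib

section
/- Let R be a binary relation on ℕ whose convolution language is regular. Then there exists a constant D > 0 with the following property (Pumping Rule 2): for every threshold l ∈ ℕ and every pair (m,n) ∈ R such that each of m and n is either < l or ≥ l + 2D, the pair (m',n') also lies in R, where m' = m − D if m ≥ l + 2D and m' = m if m < l, and likewise n' = n − D if n ≥ l + 2D and n' = n if n < l. -/
/-- The convolution word of the pair `(m, n)`, over the three-letter alphabet `Fin 3`
(`0` plays the role of `s`, `1` of `l`, `2` of `r`). -/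
def convWord (m n : ℕ) : List (Fin 3) :=
  List.replicate (min m n) 0 ++ List.replicate (m - min m n) 1 ++
    List.replicate (n - min m n) 2

/-- The convolution language of a binary relation on `ℕ`. -/
def convLang (R : ℕ → ℕ → Prop) : Language (Fin 3) :=
  {w | ∃ m n, R m n ∧ w = convWord m n}

/-- A binary relation on `ℕ` is regular if its convolution language is regular. -/
def RegularRel (R : ℕ → ℕ → Prop) : Prop :=
  (convLang R).IsRegular

/-!
Let a DFA with `k` states accept the convolution language. Reading a block `a^e` moves the
automaton along the orbit of the map `q ↦ step q a`, which is periodic from step `k` on with a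
period dividing `k!`; so for `D = k!` and `e ≥ D` the words `u a^(e+D) w` and `u a^e w` are accepted
together. Passing from `conv(m, n)` to `conv(m', n')` shortens by `D` a single block (the `r`-,
`l`- or `s`-block, as `n`, `m` or both are large), and that block has length at least `2D`.
-/

open List
open scoped Nat

namespace Function

variable {α : Type*} [Fintype α] (f : α → α) (x : α)

theorem iterate_mem_periodicPts_of_card_le {n : ℕ} (hn : Fintype.card α ≤ n) :
    f^[n] x ∈ periodicPts f := by
  obtain ⟨i, j, hne, hij⟩ := Fintype.exists_ne_map_eq_of_card_lt
    (fun i : Fin (Fintype.card α + 1) => f^[i] x) (by simp)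
  wlog hlt : i < j generalizing i j
  · exact this j i hne.symm hij.symm (lt_of_le_of_ne (not_lt.1 hlt) hne.symm)
  have hperiod : IsPeriodicPt f (j - i) (f^[i] x) := by
    rw [IsPeriodicPt, IsFixedPt, ← iterate_add_apply, Nat.sub_add_cancel hlt.le]
    exact hij.symm
  have hsplit : f^[n] x = f^[n - i] (f^[i] x) := by
    rw [← iterate_add_apply, Nat.sub_add_cancel (by omega)]
  rw [hsplit]
  exact mk_mem_periodicPts (by omega) (hperiod.apply_iterate _)

theorem iterate_add_factorial_card {n : ℕ} (hn : Fintype.card α ≤ n) :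
    f^[n + (Fintype.card α)!] x = f^[n] x := by
  rw [add_comm, iterate_add_apply]
  exact isPeriodicPt_factorial_card_of_mem_periodicPts (iterate_mem_periodicPts_of_card_le f x hn)

end Function

theorem DFA.evalFrom_replicate {α σ : Type*} (M : DFA α σ) (s : σ) (a : α) (n : ℕ) :
    M.evalFrom s (replicate n a) = (M.step · a)^[n] s := by
  induction n generalizing s with
  | zero => rfl
  | succ n ih => exact ih (M.step s a)

theorem Language.IsRegular.exists_replicate_pump {α : Type*} {L : Language α} (h : L.IsRegular) :
    ∃ D > 0, ∀ (u : List α) (a : α) (e : ℕ) (w : List α), D ≤ e →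
      (u ++ replicate (e + D) a ++ w ∈ L ↔ u ++ replicate e a ++ w ∈ L) := by
  obtain ⟨σ, _, M, rfl⟩ := h
  refine ⟨(Fintype.card σ)!, Nat.factorial_pos _, fun u a e w he => ?_⟩
  simp only [DFA.mem_accepts, DFA.eval, DFA.evalFrom_of_append, DFA.evalFrom_replicate,
    Function.iterate_add_factorial_card _ _ ((Nat.self_le_factorial _).trans he)]

theorem convWord_of_le {m n : ℕ} (h : m ≤ n) :
    convWord m n = replicate m 0 ++ replicate (n - m) 2 := by
  simp [convWord, min_eq_left h]

theorem convWord_of_ge {m n : ℕ} (h : n ≤ m) :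
    convWord m n = replicate n 0 ++ replicate (m - n) 1 := by
  simp [convWord, min_eq_right h]

theorem convWord_add_add (m n D : ℕ) :
    convWord (m + D) (n + D) = replicate (min m n + D) 0 ++
      (replicate (m - min m n) 1 ++ replicate (n - min m n) 2) := by
  simp [convWord, Nat.add_sub_add_right]

theorem convWord_injective2 : Function.Injective2 convWord := by
  intro m m' n n' h
  have h0 := congrArg (List.count (0 : Fin 3)) h
  have h1 := congrArg (List.count (1 : Fin 3)) h
  have h2 := congrArg (List.count (2 : Fin 3)) h
  simp only [convWord, count_append, count_replicate_self, count_replicate, Fin.reduceBEq,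
    Bool.false_eq_true, ↓reduceIte, add_zero, zero_add] at h0 h1 h2
  omega

theorem mem_convLang {R : ℕ → ℕ → Prop} {m n : ℕ} : convWord m n ∈ convLang R ↔ R m n :=
  ⟨fun ⟨_, _, hR, h⟩ => by
    obtain ⟨rfl, rfl⟩ := convWord_injective2 h.symm
    exact hR, fun h => ⟨m, n, h, rfl⟩⟩

theorem RegularRel.exists_pump {R : ℕ → ℕ → Prop} (hR : RegularRel R) :
    ∃ D > 0, (∀ m n, m + D ≤ n → (R m (n + D) ↔ R m n)) ∧
      (∀ m n, n + D ≤ m → (R (m + D) n ↔ R m n)) ∧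
      (∀ m n, D ≤ m → D ≤ n → (R (m + D) (n + D) ↔ R m n)) := by
  obtain ⟨D, hD, hpump⟩ := Language.IsRegular.exists_replicate_pump hR
  simp only [← mem_convLang (R := R)]
  refine ⟨D, hD, fun m n hmn => ?_, fun m n hnm => ?_, fun m n hm hn => ?_⟩
  · rw [convWord_of_le (by omega), convWord_of_le (by omega), Nat.sub_add_comm (by omega)]
    simpa using hpump (replicate m 0) 2 (n - m) [] (by omega)
  · rw [convWord_of_ge (by omega), convWord_of_ge (by omega), Nat.sub_add_comm (by omega)]
    simpa using hpump (replicate n 0) 1 (m - n) [] (by omega)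
  · rw [convWord_add_add, convWord, append_assoc]
    simpa using hpump [] 0 (min m n) _ (by omega)

theorem stmt1 (R : ℕ → ℕ → Prop) (hR : RegularRel R) :
    ∃ D : ℕ, 0 < D ∧ ∀ (l m n : ℕ), R m n →
      (m < l ∨ l + 2 * D ≤ m) → (n < l ∨ l + 2 * D ≤ n) →
      R (if l + 2 * D ≤ m then m - D else m) (if l + 2 * D ≤ n then n - D else n) := by
  obtain ⟨D, hD, hright, hleft, hboth⟩ := hR.exists_pump
  refine ⟨D, hD, fun l m n hmn hm hn => ?_⟩
  rcases hm with hm | hm <;> rcases hn with hn | hn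
  · rwa [if_neg (by omega), if_neg (by omega)]
  · obtain ⟨n, rfl⟩ : ∃ k, n = k + D := ⟨n - D, by omega⟩
    rw [if_neg (by omega), if_pos hn, Nat.add_sub_cancel]
    exact (hright m n (by omega)).1 hmn
  · obtain ⟨m, rfl⟩ : ∃ k, m = k + D := ⟨m - D, by omega⟩
    rw [if_pos hm, if_neg (by omega), Nat.add_sub_cancel]
    exact (hleft m n (by omega)).1 hmn
  · obtain ⟨m, rfl⟩ : ∃ k, m = k + D := ⟨m - D, by omega⟩
    obtain ⟨n, rfl⟩ : ∃ k, n = k + D := ⟨n - D, by omega⟩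
    rw [if_pos hm, if_pos hn, Nat.add_sub_cancel, Nat.add_sub_cancel]
    exact (hboth m n (by omega) (by omega)).1 hmn
end

section
/- Let Q be a finite nonempty type and r a binary relation on Q. Then the disjoint union of countably many copies of (Q, r), namely the structure (Q × ℕ, r'), where r' relates (q, i) to (q', j) if and only if i = j and r q q', is unary FA-presentable. -/
/-- The unary language over a one-letter alphabet associated to a set `L ⊆ ℕ`,
identifying `a^n` with `n`. -/
def unaryLang (L : Set ℕ) : Language Unit :=
  {w | w.length ∈ L}

/-- A (countable) structure `(X, ρ)` with one binary relation is unary FA-presentable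
if there are a set `L ⊆ ℕ` whose unary language is regular and a surjection
`φ : L → X` such that equality and the relation, pulled back along `φ`, are
regular relations. -/
def UnaryFAPresentable {X : Type*} (ρ : X → X → Prop) : Prop :=
  ∃ L : Set ℕ, (unaryLang L).IsRegular ∧
    ∃ φ : ℕ → X, (∀ x, ∃ n ∈ L, φ n = x) ∧
      RegularRel (fun m n => m ∈ L ∧ n ∈ L ∧ φ m = φ n) ∧
      RegularRel (fun m n => m ∈ L ∧ n ∈ L ∧ ρ (φ m) (φ n))

/-!
Enumerate `Q` as `Fin k` and send `n` to `(n mod k, n / k)`. Equality and the relation of the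
disjoint union then pull back to relations `m / k = n / k ∧ P (m mod k) (n mod k)`. A finite
automaton reading `conv(m, n)` recognises these: it tracks the residue of the common prefix
`s^min(m,n)` and counts the trailing `l`s or `r`s, which keep `m` and `n` in the same block of `k`
consecutive numbers exactly while that residue plus the count stays below `k`.
-/

lemma Nat.add_div_eq_div_iff_mod_add_lt (n l : ℕ) {k : ℕ} (hk : 0 < k) :
    (n + l) / k = n / k ↔ n % k + l < k := by
  have hsplit : n + l = (n % k + l) + k * (n / k) := by
    have := Nat.mod_add_div n k
    omega
  rw [hsplit, Nat.add_mul_div_left _ _ hk, Nat.add_eq_right, Nat.div_eq_zero_iff]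
  omega

lemma Nat.le_of_div_eq_of_mod_le {m n k : ℕ} (hdiv : m / k = n / k) (hmod : m % k ≤ n % k) :
    m ≤ n := by
  rw [← Nat.div_add_mod m k, ← Nat.div_add_mod n k, hdiv]
  exact Nat.add_le_add_left hmod _

lemma convWord_add_left (n l : ℕ) :
    convWord (n + l) n = List.replicate n 0 ++ List.replicate l 1 := by
  simp [convWord]

lemma convWord_add_right (m l : ℕ) :
    convWord m (m + l) = List.replicate m 0 ++ List.replicate l 2 := by
  simp [convWord]

lemma convWord_self (m : ℕ) : convWord m m = List.replicate m 0 := by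
  simp [convWord]

lemma regularRel_of_dfa {σ : Type} [Fintype σ] (M : DFA (Fin 3) σ) (R : ℕ → ℕ → Prop)
    (hconv : ∀ w ∈ M.accepts, ∃ m n, w = convWord m n)
    (hR : ∀ m n, convWord m n ∈ M.accepts ↔ R m n) : RegularRel R := by
  refine ⟨σ, inferInstance, M, Set.ext fun w => ⟨fun hw => ?_, ?_⟩⟩
  · obtain ⟨m, n, rfl⟩ := hconv w hw
    exact ⟨m, n, (hR m n).1 hw, rfl⟩
  · rintro ⟨m, n, hmn, rfl⟩
    exact (hR m n).2 hmn

open Fin.NatCast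

section BlockDFA

variable (k : ℕ) [NeZero k]

/-- The state after a prefix of `convWord m n` is `some (m', n')`, cast to `Fin k`, where `(m', n')`
is the pair the prefix spells; it is `none` once `m / k = n / k` has become impossible. -/
def blockDFA (P : Fin k → Fin k → Prop) : DFA (Fin 3) (Option (Fin k × Fin k)) where
  step
    | some (i, j), 0 => if i = j then some (i + 1, j + 1) else none
    | some (i, j), 1 => if j ≤ i ∧ (i : ℕ) + 1 < k then some (i + 1, j) else none
    | some (i, j), 2 => if i ≤ j ∧ (j : ℕ) + 1 < k then some (i, j + 1) else none
    | none, _ => none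
  start := some (0, 0)
  accept := {s | ∃ i j, s = some (i, j) ∧ P i j}

variable {k} {P : Fin k → Fin k → Prop}

lemma blockDFA_eval_zeros (n : ℕ) :
    (blockDFA k P).eval (List.replicate n 0) = some ((n : Fin k), (n : Fin k)) := by
  induction n with
  | zero => rfl
  | succ n ih =>
    rw [List.replicate_succ', DFA.eval_append_singleton, ih]
    simp [blockDFA]

lemma blockDFA_eval_zeros_append_ones (n l : ℕ) :
    (blockDFA k P).eval (List.replicate n 0 ++ List.replicate l 1) =
      if (n + l) / k = n / k then some (((n + l : ℕ) : Fin k), (n : Fin k)) else none := by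
  have hk : 0 < k := Nat.pos_of_neZero k
  induction l with
  | zero => simp [blockDFA_eval_zeros]
  | succ l ih =>
    rw [List.replicate_succ', ← List.append_assoc, DFA.eval_append_singleton, ih]
    simp only [Nat.add_div_eq_div_iff_mod_add_lt _ _ hk]
    by_cases hl : n % k + l < k
    · have hval : (((n + l : ℕ) : Fin k) : ℕ) = n % k + l := by
        rw [Fin.val_natCast, ← Nat.mod_add_mod, Nat.mod_eq_of_lt hl]
      rw [if_pos hl]
      dsimp only [blockDFA]
      have hle : (n : Fin k) ≤ ((n + l : ℕ) : Fin k) := by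
        rw [Fin.le_def, hval, Fin.val_natCast]
        omega
      simp only [hle, hval, true_and, ← add_assoc, Nat.cast_succ]
    · rw [if_neg hl, if_neg (by omega)]
      rfl

lemma blockDFA_eval_zeros_append_twos (m l : ℕ) :
    (blockDFA k P).eval (List.replicate m 0 ++ List.replicate l 2) =
      if (m + l) / k = m / k then some ((m : Fin k), ((m + l : ℕ) : Fin k)) else none := by
  have hk : 0 < k := Nat.pos_of_neZero k
  induction l with
  | zero => simp [blockDFA_eval_zeros]
  | succ l ih =>
    rw [List.replicate_succ', ← List.append_assoc, DFA.eval_append_singleton, ih]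
    simp only [Nat.add_div_eq_div_iff_mod_add_lt _ _ hk]
    by_cases hl : m % k + l < k
    · have hval : (((m + l : ℕ) : Fin k) : ℕ) = m % k + l := by
        rw [Fin.val_natCast, ← Nat.mod_add_mod, Nat.mod_eq_of_lt hl]
      rw [if_pos hl]
      dsimp only [blockDFA]
      have hle : (m : Fin k) ≤ ((m + l : ℕ) : Fin k) := by
        rw [Fin.le_def, hval, Fin.val_natCast]
        omega
      simp only [hle, hval, true_and, ← add_assoc, Nat.cast_succ]
    · rw [if_neg hl, if_neg (by omega)]
      rfl

lemma blockDFA_eval_convWord (m n : ℕ) :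
    (blockDFA k P).eval (convWord m n) =
      if m / k = n / k then some ((m : Fin k), (n : Fin k)) else none := by
  rcases le_total n m with hnm | hmn
  · obtain ⟨l, rfl⟩ := Nat.exists_eq_add_of_le hnm
    rw [convWord_add_left, blockDFA_eval_zeros_append_ones]
  · obtain ⟨l, rfl⟩ := Nat.exists_eq_add_of_le hmn
    rw [convWord_add_right, blockDFA_eval_zeros_append_twos]
    simp only [eq_comm]

lemma exists_convWord_append_of_blockDFA_step_ne_none {m n : ℕ} {x : Fin 3}
    (hdiv : m / k = n / k) (hx : (blockDFA k P).step (some (m, n)) x ≠ none) :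
    ∃ m' n', convWord m n ++ [x] = convWord m' n' := by
  rcases (by decide : ∀ y : Fin 3, y = 0 ∨ y = 1 ∨ y = 2) x with rfl | rfl | rfl
  · have hmod : m % k = n % k := by
      by_contra h
      refine hx (if_neg ?_)
      rwa [Fin.ext_iff, Fin.val_natCast, Fin.val_natCast]
    obtain rfl := Nat.ext_div_mod hdiv hmod
    exact ⟨m + 1, m + 1, by rw [convWord_self, convWord_self, List.replicate_succ']⟩
  · have hmod : n % k ≤ m % k := by
      by_contra h
      refine hx (if_neg ?_)
      rw [Fin.le_def, Fin.val_natCast, Fin.val_natCast]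
      exact fun h' => h h'.1
    obtain ⟨l, rfl⟩ := Nat.exists_eq_add_of_le (Nat.le_of_div_eq_of_mod_le hdiv.symm hmod)
    exact ⟨n + (l + 1), n, by
      rw [convWord_add_left, convWord_add_left, List.replicate_succ', List.append_assoc]⟩
  · have hmod : m % k ≤ n % k := by
      by_contra h
      refine hx (if_neg ?_)
      rw [Fin.le_def, Fin.val_natCast, Fin.val_natCast]
      exact fun h' => h h'.1
    obtain ⟨l, rfl⟩ := Nat.exists_eq_add_of_le (Nat.le_of_div_eq_of_mod_le hdiv hmod)
    exact ⟨m, m + (l + 1), by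
      rw [convWord_add_right, convWord_add_right, List.replicate_succ', List.append_assoc]⟩

lemma exists_convWord_of_blockDFA_eval_ne_none {w : List (Fin 3)}
    (hw : (blockDFA k P).eval w ≠ none) : ∃ m n, w = convWord m n := by
  induction w using List.reverseRecOn with
  | nil => exact ⟨0, 0, rfl⟩
  | append_singleton w x ih =>
    rw [DFA.eval_append_singleton] at hw
    have hw' : (blockDFA k P).eval w ≠ none := fun h => hw (by rw [h]; rfl)
    obtain ⟨m, n, rfl⟩ := ih hw'
    rw [blockDFA_eval_convWord] at hw hw'
    have hdiv : m / k = n / k := by by_contra h; exact hw' (if_neg h)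
    rw [if_pos hdiv] at hw
    exact exists_convWord_append_of_blockDFA_step_ne_none hdiv hw

end BlockDFA

theorem regularRel_div_eq_and (k : ℕ) [NeZero k] (P : Fin k → Fin k → Prop) :
    RegularRel fun m n => m / k = n / k ∧ P m n := by
  refine regularRel_of_dfa (blockDFA k P) _
    (fun w hw => exists_convWord_of_blockDFA_eval_ne_none (k := k) (P := P) fun h => ?_)
    fun m n => ?_
  · obtain ⟨i, j, hij, -⟩ := (DFA.mem_accepts _).1 hw
    simp [h] at hij
  · rw [DFA.mem_accepts, blockDFA_eval_convWord]
    split_ifs with hdiv <;> simp [blockDFA, hdiv]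

lemma unaryLang_univ_isRegular : (unaryLang Set.univ).IsRegular :=
  ⟨Unit, inferInstance, ⟨fun _ _ => (), (), Set.univ⟩, Set.ext fun _ => Iff.rfl⟩

theorem stmt5 (Q : Type) [Fintype Q] [Nonempty Q] (r : Q → Q → Prop) :
    UnaryFAPresentable (fun p q : Q × ℕ => p.2 = q.2 ∧ r p.1 q.1) := by
  set k := Fintype.card Q
  have hk : 0 < k := Fintype.card_pos
  have : NeZero k := ⟨hk.ne'⟩
  let e : Fin k ≃ Q := (Fintype.equivFin Q).symm
  refine ⟨Set.univ, unaryLang_univ_isRegular, fun n => (e n, n / k), ?_, ?_, ?_⟩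
  · rintro ⟨q, i⟩
    refine ⟨k * i + e.symm q, trivial, ?_⟩
    have hcast : ((k * i + e.symm q : ℕ) : Fin k) = e.symm q := by simp
    simp only [hcast, e.apply_symm_apply, Nat.mul_add_div hk, Nat.div_eq_of_lt (e.symm q).isLt,
      add_zero]
  · convert regularRel_div_eq_and k (· = ·) using 3
    simp [Prod.ext_iff, and_comm]
  · convert regularRel_div_eq_and k (fun a b => r (e a) (e b)) using 3
    simp
end
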